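/- arXiv:0912.0238 — 3 statements merged into one kernel-verified Lean document; each statement's English description precedes it below -/
import Mathlib

section
/- (Brauer's theorem) Let A be an n×n complex matrix with eigenvalue λ₀ and corresponding right eigenvector x (so A x = λ₀ x, x ≠ 0). Then for every complex row vector v, the characteristic polynomial of A + x vᵀ equals the characteristic polynomial of A multiplied by (t - (λ₀ + v·x))/(t - λ₀); in particular λ₀ + v·x is an eigenvalue of A + x vᵀ, and every eigenvalue of A other than λ₀ (with multiplicity) remains an eigenvalue of A + x vᵀ. -/
/-!
If `B x = c x`, then `B (c - x vᵀ) = c (B - x vᵀ)`. Taking determinants, and using that the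
rank-one matrix `x vᵀ` has characteristic polynomial `t ^ n - (v ⬝ x) t ^ (n - 1)`, gives
`c ^ n det (B - x vᵀ) = c ^ (n - 1) (c - v ⬝ x) det B`, so
`det (B - x vᵀ) c = det B (c - v ⬝ x)` as soon as `c` is not a zero divisor. Brauer's identity is
the case `B = t - A`, `c = t - λ₀` over the polynomial ring; the eigenvalue statements follow by
evaluating it, and `x` itself is an eigenvector of `A + x vᵀ` for `λ₀ + v ⬝ x`.
-/

open Matrix Polynomial

namespace Matrix

variable {R : Type*} [CommRing R] {n : Type*} [Fintype n]

theorem add_vecMulVec_mulVec_of_mulVec_eq_smul {A : Matrix n n R} {x : n → R} {μ : R}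
    (hAx : A *ᵥ x = μ • x) (v : n → R) : (A + vecMulVec x v) *ᵥ x = (μ + v ⬝ᵥ x) • x := by
  rw [add_mulVec, hAx, vecMulVec_mulVec, add_smul, op_smul_eq_smul]

variable [DecidableEq n]

theorem det_scalar_sub_vecMulVec (c : R) (x v : n → R) :
    (scalar n c - vecMulVec x v).det =
      c ^ Fintype.card n - (x ⬝ᵥ v) * c ^ (Fintype.card n - 1) := by
  rw [← eval_charpoly, charpoly_vecMulVec]
  simp

theorem det_sub_vecMulVec_mul_of_mulVec_eq_smul {B : Matrix n n R} {x : n → R} {c : R}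
    (hc : IsLeftRegular c) (hBx : B *ᵥ x = c • x) (v : n → R) :
    (B - vecMulVec x v).det * c = B.det * (c - v ⬝ᵥ x) := by
  have hfactor : B * (scalar n c - vecMulVec x v) = c • (B - vecMulVec x v) := by
    rw [mul_sub, mul_vecMulVec, hBx, smul_vecMulVec, smul_sub, scalar_apply,
      ← smul_eq_mul_diagonal]
  have hdet := congrArg det hfactor
  rw [det_mul, det_smul, det_scalar_sub_vecMulVec] at hdet
  rcases Nat.eq_zero_or_eq_succ_pred (Fintype.card n) with hn | hn
  · have := Fintype.card_eq_zero_iff.mp hn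
    simp
  · rw [hn] at hdet
    apply hc.pow (Fintype.card n - 1)
    simp only [pow_succ, Nat.succ_sub_one] at hdet
    rw [dotProduct_comm]
    linear_combination -hdet

theorem charmatrix_add_vecMulVec (A : Matrix n n R) (x v : n → R) :
    charmatrix (A + vecMulVec x v) = charmatrix A - vecMulVec (C ∘ x) (C ∘ v) := by
  ext i j : 1
  simp only [charmatrix_apply, add_apply, sub_apply, vecMulVec_apply, Function.comp_apply,
    map_add, map_mul]
  ring

theorem charmatrix_mulVec_of_mulVec_eq_smul {A : Matrix n n R} {x : n → R} {μ : R}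
    (hAx : A *ᵥ x = μ • x) : charmatrix A *ᵥ (C ∘ x) = (X - C μ) • (C ∘ x) := by
  ext i
  rw [charmatrix, sub_mulVec, Pi.sub_apply, RingHom.mapMatrix_apply, ← RingHom.map_mulVec, hAx]
  simp [scalar_apply, mulVec_diagonal, sub_mul]

theorem charpoly_add_vecMulVec_mul {A : Matrix n n R} {x : n → R} {μ : R}
    (hAx : A *ᵥ x = μ • x) (v : n → R) :
    (A + vecMulVec x v).charpoly * (X - C μ) = A.charpoly * (X - C (μ + v ⬝ᵥ x)) := by
  rw [charpoly, charmatrix_add_vecMulVec,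
    det_sub_vecMulVec_mul_of_mulVec_eq_smul (monic_X_sub_C μ).isRegular.left
      (charmatrix_mulVec_of_mulVec_eq_smul hAx), ← RingHom.map_dotProduct, C_add, sub_sub,
    charpoly]

theorem isRoot_charpoly_of_mulVec_eq_smul [IsDomain R] {A : Matrix n n R} {x : n → R} {μ : R}
    (hx : x ≠ 0) (hAx : A *ᵥ x = μ • x) : A.charpoly.IsRoot μ := by
  rw [IsRoot, eval_charpoly, ← exists_mulVec_eq_zero_iff]
  refine ⟨x, hx, ?_⟩
  rw [sub_mulVec, hAx, scalar_apply, ← smul_one_eq_diagonal, smul_mulVec, one_mulVec, sub_self]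

end Matrix

/-- Brauer's theorem: if `A x = λ₀ x` with `x ≠ 0`, then for every vector `v` the
characteristic polynomial of `A + x vᵀ` satisfies
`charpoly (A + x vᵀ) * (t - λ₀) = charpoly A * (t - (λ₀ + v ⬝ x))`;
in particular `λ₀ + v ⬝ x` is an eigenvalue of `A + x vᵀ`, and every eigenvalue of `A`
other than `λ₀` remains an eigenvalue of `A + x vᵀ`. -/
theorem stmt_1 {n : ℕ} (A : Matrix (Fin n) (Fin n) ℂ) (lam0 : ℂ)
    (x : Fin n → ℂ) (hx : x ≠ 0) (hAx : A *ᵥ x = lam0 • x) (v : Fin n → ℂ) :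
    (A + Matrix.vecMulVec x v).charpoly * (X - C lam0)
        = A.charpoly * (X - C (lam0 + v ⬝ᵥ x)) ∧
      (A + Matrix.vecMulVec x v).charpoly.IsRoot (lam0 + v ⬝ᵥ x) ∧
      (∀ μ : ℂ, μ ≠ lam0 → A.charpoly.IsRoot μ →
        (A + Matrix.vecMulVec x v).charpoly.IsRoot μ) := by
  have hbrauer := charpoly_add_vecMulVec_mul hAx v
  refine ⟨hbrauer, isRoot_charpoly_of_mulVec_eq_smul hx
    (add_vecMulVec_mulVec_of_mulVec_eq_smul hAx v), fun μ hμ hroot => ?_⟩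
  have hevalμ := congrArg (eval μ) hbrauer
  rw [eval_mul, eval_mul, hroot.eq_zero, zero_mul, mul_eq_zero, eval_sub, eval_X, eval_C,
    sub_eq_zero] at hevalμ
  exact hevalμ.resolve_right hμ
end

section
/- Let P be a row-stochastic matrix, v a probability distribution, and 0 ≤ α < 1. Then the matrix αP + (1−α)𝟙ᵀv is row-stochastic, and every eigenvalue of it other than 1 has modulus at most α; in particular, 1 is a strictly dominant (simple modulus-wise) eigenvalue when α < 1. -/
/-!
A left eigenvector `u` of `Q` for an eigenvalue `μ ≠ 1` satisfies `u ⬝ᵥ 𝟙 = 0`, because `Q 𝟙 = 𝟙`.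
Hence the rank-one restart term `𝟙ᵀ v` annihilates `u` and `μ u = α (u P)`. Right multiplication
by the stochastic matrix `P` does not increase the `ℓ¹` norm, so `|μ| ≤ α`.
-/

open Matrix

namespace Matrix

variable {n : Type*} [Fintype n]

theorem dotProduct_one_eq_zero_of_vecMul_eq_smul {K : Type*} [Field K] {A : Matrix n n K}
    (hA : A *ᵥ 1 = 1) {u : n → K} {μ : K} (hu : u ᵥ* A = μ • u) (hμ : μ ≠ 1) :
    u ⬝ᵥ 1 = 0 := by
  have : μ * (u ⬝ᵥ 1) = u ⬝ᵥ 1 := by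
    rw [← smul_eq_mul, ← smul_dotProduct, ← hu, ← dotProduct_mulVec, hA]
  by_contra h
  exact hμ (mul_left_eq_self₀.mp this |>.resolve_right h)

variable [DecidableEq n]

theorem exists_vecMul_eq_smul_of_isRoot_charpoly {K : Type*} [Field K] {A : Matrix n n K} {μ : K}
    (h : A.charpoly.IsRoot μ) : ∃ u ≠ 0, u ᵥ* A = μ • u := by
  have hdet : (scalar n μ - A).det = 0 := by rw [← eval_charpoly]; exact h
  obtain ⟨u, hu0, hu⟩ := exists_vecMul_eq_zero_iff.mpr hdet
  refine ⟨u, hu0, ?_⟩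
  rw [vecMul_sub, sub_eq_zero] at hu
  simpa using hu.symm

theorem map_mulVec_one_of_mem_rowStochastic {R S : Type*} [Semiring R] [PartialOrder R]
    [IsOrderedRing R] [Semiring S] {A : Matrix n n R} (hA : A ∈ rowStochastic R n)
    (f : R →+* S) : A.map f *ᵥ 1 = 1 := by
  ext i
  simpa [one_vecMul_of_mem_rowStochastic hA] using (RingHom.map_mulVec f A 1 i).symm

theorem vecMulVec_one_mem_rowStochastic {R : Type*} [Semiring R] [PartialOrder R]
    [IsOrderedRing R] {v : n → R} (hv : ∀ i, 0 ≤ v i) (hv1 : ∑ i, v i = 1) :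
    vecMulVec 1 v ∈ rowStochastic R n :=
  mem_rowStochastic_iff_sum.mpr
    ⟨fun _ j => by simpa [vecMulVec_apply] using hv j, fun _ => by simpa [vecMulVec_apply] using hv1⟩

theorem sum_norm_vecMul_map_le {𝕜 : Type*} [RCLike 𝕜] {P : Matrix n n ℝ}
    (hP : P ∈ rowStochastic ℝ n) (u : n → 𝕜) :
    ∑ j, ‖(u ᵥ* P.map (algebraMap ℝ 𝕜)) j‖ ≤ ∑ i, ‖u i‖ :=
  calc ∑ j, ‖(u ᵥ* P.map (algebraMap ℝ 𝕜)) j‖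
      ≤ ∑ j, ∑ i, ‖u i‖ * P i j := by
        gcongr with j
        refine (norm_sum_le _ _).trans_eq (Finset.sum_congr rfl fun i _ => ?_)
        change ‖u i * algebraMap ℝ 𝕜 (P i j)‖ = _
        rw [norm_mul, norm_algebraMap', Real.norm_of_nonneg (hP.1 i j)]
    _ = ∑ i, ‖u i‖ := by
        rw [Finset.sum_comm]
        simp_rw [← Finset.mul_sum, sum_row_of_mem_rowStochastic hP, mul_one]

theorem norm_le_of_vecMul_map_smul_eq_smul {𝕜 : Type*} [RCLike 𝕜] {P : Matrix n n ℝ}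
    (hP : P ∈ rowStochastic ℝ n) {α : ℝ} (hα : 0 ≤ α) {u : n → 𝕜} (hu0 : u ≠ 0) {μ : 𝕜}
    (hu : u ᵥ* (α • P).map (algebraMap ℝ 𝕜) = μ • u) : ‖μ‖ ≤ α := by
  have hpos : 0 < ∑ i, ‖u i‖ := by
    obtain ⟨i, hi⟩ := Function.ne_iff.mp hu0
    exact Finset.sum_pos' (fun i _ => norm_nonneg _) ⟨i, Finset.mem_univ i, norm_pos_iff.mpr hi⟩
  have hsmul : u ᵥ* (α • P).map (algebraMap ℝ 𝕜) = α • (u ᵥ* P.map (algebraMap ℝ 𝕜)) := by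
    rw [← vecMul_smul, Matrix.map_smul _ _ fun a => by simp [Algebra.smul_def]]
  refine le_of_mul_le_mul_right ?_ hpos
  calc ‖μ‖ * ∑ i, ‖u i‖ = ∑ j, ‖(u ᵥ* (α • P).map (algebraMap ℝ 𝕜)) j‖ := by
        simp [hu, norm_mul, Finset.mul_sum]
    _ = α * ∑ j, ‖(u ᵥ* P.map (algebraMap ℝ 𝕜)) j‖ := by
        simp [hsmul, norm_smul, Real.norm_of_nonneg hα, Finset.mul_sum]
    _ ≤ α * ∑ i, ‖u i‖ := mul_le_mul_of_nonneg_left (sum_norm_vecMul_map_le hP u) hα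

end Matrix

/-- The matrix `αP + (1-α) 𝟙ᵀ v` (Markov chain with restart) is row-stochastic, and
every eigenvalue of it other than 1 has modulus at most `α`; so 1 is a strictly
dominant eigenvalue when `α < 1`. -/
theorem stmt_14 {n : ℕ} (P : Matrix (Fin n) (Fin n) ℝ)
    (hnonneg : ∀ i j, 0 ≤ P i j) (hrow : ∀ i, ∑ j, P i j = 1)
    (v : Fin n → ℝ) (hv : ∀ i, 0 ≤ v i) (hv1 : ∑ i, v i = 1)
    (α : ℝ) (hα0 : 0 ≤ α) (hα1 : α < 1) :
    let Q : Matrix (Fin n) (Fin n) ℝ :=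
      α • P + (1 - α) • Matrix.vecMulVec (fun _ => (1 : ℝ)) v
    (∀ i j, 0 ≤ Q i j) ∧ (∀ i, ∑ j, Q i j = 1) ∧
      ∀ μ : ℂ, (Q.map (algebraMap ℝ ℂ)).charpoly.IsRoot μ → μ ≠ 1 → ‖μ‖ ≤ α := by
  intro Q
  have hP : P ∈ rowStochastic ℝ (Fin n) := mem_rowStochastic_iff_sum.mpr ⟨hnonneg, hrow⟩
  have hQ : Q ∈ rowStochastic ℝ (Fin n) :=
    convex_rowStochastic hP (vecMulVec_one_mem_rowStochastic hv hv1) hα0 (by linarith)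
      (by ring)
  refine ⟨fun i j => hQ.1 i j, sum_row_of_mem_rowStochastic hQ, fun μ hμ hμ1 => ?_⟩
  obtain ⟨u, hu0, hu⟩ := exists_vecMul_eq_smul_of_isRoot_charpoly hμ
  have hu1 : u ⬝ᵥ 1 = 0 :=
    dotProduct_one_eq_zero_of_vecMul_eq_smul (map_mulVec_one_of_mem_rowStochastic hQ _) hu hμ1
  have hrestart : ((1 - α) • vecMulVec (fun _ => (1 : ℝ)) v).map (algebraMap ℝ ℂ) =
      vecMulVec (1 : Fin n → ℂ) (fun j => ((1 - α) * v j : ℂ)) := by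
    ext i j
    simp [vecMulVec_apply]
  refine norm_le_of_vecMul_map_smul_eq_smul hP hα0 hu0 ?_
  rwa [Matrix.map_add _ (map_add _), vecMul_add, hrestart, vecMul_vecMulVec, hu1, zero_smul,
    add_zero] at hu
end

section
/- There exist a 2×2 matrix M with spectral radius less than 1 and a nonnegative row vector v such that the rankings induced by v M (I − M)⁻¹ and v (I − M)⁻¹ differ, i.e., there are coordinates i, j with (vM(I−M)⁻¹)_i < (vM(I−M)⁻¹)_j but (v(I−M)⁻¹)_i > (v(I−M)⁻¹)_j. -/
/-!
Take the nilpotent matrix `M = !![0, 1/2; 0, 0]` and `v = (1, 0)`. Every eigenvalue of `M`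
is `0`, and `M ^ 2 = 0` gives `(1 - M)⁻¹ = 1 + M`. Hence `v (1 - M)⁻¹ = (1, 1/2)` ranks the
first coordinate on top, while `v M (1 - M)⁻¹ = v M = (0, 1/2)` ranks the second one on top.
-/

open Matrix Polynomial

namespace Matrix

variable {n R : Type*} [Fintype n] [DecidableEq n]

theorem charpoly_eq_X_pow_of_isNilpotent [CommRing R] [IsDomain R] {M : Matrix n n R}
    (hM : IsNilpotent M) : M.charpoly = X ^ Fintype.card n :=
  sub_eq_zero.mp (isNilpotent_charpoly_sub_pow_of_isNilpotent hM).eq_zero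

theorem eq_zero_of_isRoot_charpoly_of_isNilpotent [CommRing R] [IsDomain R]
    {M : Matrix n n R} (hM : IsNilpotent M) {μ : R} (hμ : M.charpoly.IsRoot μ) : μ = 0 := by
  rw [charpoly_eq_X_pow_of_isNilpotent hM, IsRoot.def, eval_pow, eval_X] at hμ
  exact IsNilpotent.eq_zero ⟨_, hμ⟩

theorem inv_one_sub_eq_one_add_of_mul_self_eq_zero [CommRing R] {M : Matrix n n R}
    (hM : M * M = 0) : (1 - M)⁻¹ = 1 + M :=
  inv_eq_right_inv <| by rw [sub_mul, mul_add, mul_add, hM]; simp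

end Matrix

/-- For a general boundary condition `v`, the indices `v M (I-M)⁻¹` and `v (I-M)⁻¹`
can induce different rankings: there is a 2×2 matrix `M` with spectral radius `< 1`
and a nonnegative vector `v` with coordinates ordered oppositely by the two indices. -/
theorem stmt_16 :
    ∃ (M : Matrix (Fin 2) (Fin 2) ℝ) (v : Fin 2 → ℝ),
      (∀ μ : ℂ, (M.map (algebraMap ℝ ℂ)).charpoly.IsRoot μ → ‖μ‖ < 1) ∧
      (∀ i, 0 ≤ v i) ∧
      ∃ i j : Fin 2,
        ((v ᵥ* M) ᵥ* (1 - M)⁻¹) i < ((v ᵥ* M) ᵥ* (1 - M)⁻¹) j ∧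
        (v ᵥ* (1 - M)⁻¹) j < (v ᵥ* (1 - M)⁻¹) i := by
  set M : Matrix (Fin 2) (Fin 2) ℝ := !![0, 1 / 2; 0, 0]
  have hMM : M * M = 0 := by
    ext i j; fin_cases i <;> fin_cases j <;> simp [M, mul_apply]
  have hnil : IsNilpotent (M.map (algebraMap ℝ ℂ)) :=
    IsNilpotent.map ⟨2, by rw [sq, hMM]⟩ (algebraMap ℝ ℂ).mapMatrix
  refine ⟨M, ![1, 0], fun μ hμ => ?_, fun i => by fin_cases i <;> simp, 0, 1, ?_⟩
  · simp [eq_zero_of_isRoot_charpoly_of_isNilpotent hnil hμ]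
  rw [inv_one_sub_eq_one_add_of_mul_self_eq_zero hMM]
  norm_num [M, vecMul, dotProduct, Fin.sum_univ_two]
end
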